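/- The KL divergence between two von Mises distributions with the same concentration, D_KL(vM(m₁, c) ‖ vM(m₂, c)), equals c·(I₁(c)/I₀(c))·(1 − cos(m₁ − m₂)). -/

import Mathlib

open Real

/-- Modified Bessel function of the first kind of order 0. -/
noncomputable def besselI0 (c : ℝ) : ℝ := (1 / (2 * π)) * ∫ x in (-π)..π, Real.exp (c * Real.cos x)

/-- Modified Bessel function of the first kind of order 1. -/
noncomputable def besselI1 (c : ℝ) : ℝ :=
  (1 / (2 * π)) * ∫ x in (-π)..π, Real.cos x * Real.exp (c * Real.cos x)

/-- von Mises probability density `f(x | m, c) = exp(c cos(x - m)) / (2π I₀(c))`. -/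
noncomputable def vMpdf (x m c : ℝ) : ℝ := Real.exp (c * Real.cos (x - m)) / (2 * π * besselI0 c)

lemma besselI0_pos (c : ℝ) : 0 < besselI0 c := by
  unfold besselI0
  have hπ := Real.pi_pos
  have h : 0 < ∫ x in (-π)..π, Real.exp (c * Real.cos x) := by
    apply intervalIntegral.intervalIntegral_pos_of_pos
    · exact (Real.continuous_exp.comp (continuous_const.mul Real.continuous_cos)).intervalIntegrable _ _
    · intro x; exact Real.exp_pos _
    · linarith
  positivity

lemma sin_exp_integral (c : ℝ) : ∫ x in (-π)..π, Real.sin x * Real.exp (c * Real.cos x) = 0 := by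
  have h1 : (∫ x in (-π)..π, Real.sin (-x) * Real.exp (c * Real.cos (-x)))
      = ∫ x in (-π)..π, Real.sin x * Real.exp (c * Real.cos x) := by
    rw [intervalIntegral.integral_comp_neg (fun x => Real.sin x * Real.exp (c * Real.cos x))]
    simp
  simp only [Real.sin_neg, Real.cos_neg, neg_mul, intervalIntegral.integral_neg] at h1
  linarith

lemma cos_exp_integral (c : ℝ) :
    ∫ x in (-π)..π, Real.cos x * Real.exp (c * Real.cos x) = 2 * π * besselI1 c := by
  unfold besselI1
  have hπ := Real.pi_ne_zero
  field_simp
  simp only [mul_comm _ c]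

/-- The KL divergence between two von Mises distributions with the same concentration:
`D_KL(vM(m₁, c) ‖ vM(m₂, c)) = c (I₁(c)/I₀(c)) (1 − cos(m₁ − m₂))`. -/
theorem vonMises_kl_same_concentration (m₁ m₂ c : ℝ) (hc : 0 ≤ c) :
    ∫ x in (-π)..π, vMpdf x m₁ c * Real.log (vMpdf x m₁ c / vMpdf x m₂ c)
      = c * (besselI1 c / besselI0 c) * (1 - Real.cos (m₁ - m₂)) := by
  have hI0 := besselI0_pos c
  have hπ := Real.pi_pos
  have hD : (2 * π * besselI0 c) ≠ 0 := by positivity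
  set δ : ℝ := m₁ - m₂ with hδ
  set g : ℝ → ℝ := fun u =>
    Real.exp (c * Real.cos u) * (c * Real.cos u - c * Real.cos (u + δ)) with hg
  -- pointwise rewrite of the integrand
  have hpt : ∀ x, vMpdf x m₁ c * Real.log (vMpdf x m₁ c / vMpdf x m₂ c)
      = g (x - m₁) / (2 * π * besselI0 c) := by
    intro x
    have hratio : vMpdf x m₁ c / vMpdf x m₂ c
        = Real.exp (c * Real.cos (x - m₁) - c * Real.cos (x - m₂)) := by
      unfold vMpdf
      rw [Real.exp_sub]
      field_simp
    rw [hratio, Real.log_exp]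
    unfold vMpdf
    have : x - m₁ + δ = x - m₂ := by rw [hδ]; ring
    simp only [hg, this]
    ring
  simp only [hpt]
  rw [intervalIntegral.integral_div]
  -- shift the integration variable
  have hshift : (∫ x in (-π)..π, g (x - m₁)) = ∫ u in (-π)..π, g u := by
    rw [intervalIntegral.integral_comp_sub_right g m₁]
    have hper : Function.Periodic g (2 * π) := by
      intro u
      simp only [hg]
      rw [show u + 2 * π + δ = (u + δ) + 2 * π by ring, Real.cos_add_two_pi,
        Real.cos_add_two_pi]
    have := hper.intervalIntegral_add_eq (-π - m₁) (-π)
    rw [show -π - m₁ + 2 * π = π - m₁ by ring, show -π + 2 * π = π by ring] at this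
    exact this
  rw [hshift]
  -- compute ∫ g
  have hgsplit : ∀ u, g u = (c * (1 - Real.cos δ)) * (Real.cos u * Real.exp (c * Real.cos u))
      + (c * Real.sin δ) * (Real.sin u * Real.exp (c * Real.cos u)) := by
    intro u
    simp only [hg]
    rw [Real.cos_add]
    ring
  have hcont1 : Continuous fun u : ℝ => Real.cos u * Real.exp (c * Real.cos u) := by
    exact Real.continuous_cos.mul (Real.continuous_exp.comp (continuous_const.mul Real.continuous_cos))
  have hcont2 : Continuous fun u : ℝ => Real.sin u * Real.exp (c * Real.cos u) := by
    exact Real.continuous_sin.mul (Real.continuous_exp.comp (continuous_const.mul Real.continuous_cos))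
  have hgint : (∫ u in (-π)..π, g u)
      = (c * (1 - Real.cos δ)) * (2 * π * besselI1 c) := by
    simp only [hgsplit]
    rw [intervalIntegral.integral_add
      (f := fun u : ℝ => (c * (1 - Real.cos δ)) * (Real.cos u * Real.exp (c * Real.cos u)))
      (g := fun u : ℝ => (c * Real.sin δ) * (Real.sin u * Real.exp (c * Real.cos u)))
      ((continuous_const.mul hcont1).intervalIntegrable _ _)
      ((continuous_const.mul hcont2).intervalIntegrable _ _),
      intervalIntegral.integral_const_mul, intervalIntegral.integral_const_mul,
      cos_exp_integral, sin_exp_integral]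
    ring
  rw [hgint]
  have hI0' : besselI0 c ≠ 0 := ne_of_gt hI0
  have hπ' : π ≠ 0 := Real.pi_ne_zero
  field_simp
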